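/- arXiv:1005.0606 — 7 statements merged into one kernel-verified Lean document; each statement's English description precedes it below -/
import Mathlib

section
/- Let d ≥ 3 and let G be a subgroup of the symmetric group on Fin d that acts transitively on Fin d. If G contains a permutation σ that is a (d−1)-cycle (i.e. σ has exactly one nontrivial cycle and that cycle has length d−1, equivalently Equiv.Perm.cycleType σ = {d−1}), then the action of G on Fin d is primitive, i.e. every block of G is trivial. -/
/-!
A `(d-1)`-cycle `σ` fixes exactly one point `a`. Translating a block so that it contains `a`,
`σ` stabilizes it, because blocks are stabilized by the stabilizer of any of their points.
If the block also contains some `b ≠ a`, it then contains the whole `σ`-cycle through `b`,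
which is everything except `a`; so the block is all of `Fin d`.
-/

open Equiv MulAction Pointwise

theorem Equiv.Perm.exists_fixedPoints_eq_singleton {α : Type*} [Fintype α] [DecidableEq α]
    {σ : Perm α} (hσ : σ.cycleType = {Fintype.card α - 1}) :
    ∃ a, Function.fixedPoints σ = {a} := by
  have hcard : 2 ≤ Fintype.card α - 1 := σ.two_le_of_mem_cycleType (by simp [hσ])
  have hfix : Fintype.card (Function.fixedPoints σ) = 1 := by
    rw [σ.card_fixedPoints, hσ, Multiset.sum_singleton]
    omega
  obtain ⟨⟨a, ha⟩, hunique⟩ := Fintype.card_eq_one_iff.mp hfix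
  refine ⟨a, Set.eq_singleton_iff_unique_mem.mpr ⟨ha, fun c hc => ?_⟩⟩
  simpa using hunique ⟨c, hc⟩

theorem MulAction.IsBlock.mem_of_sameCycle {α : Type*} {G : Subgroup (Perm α)}
    {B : Set α} (hB : IsBlock G B) {σ : Perm α} (hσG : σ ∈ G) {a b c : α} (ha : a ∈ B)
    (hσa : σ a = a) (hb : b ∈ B) (hbc : σ.SameCycle b c) : c ∈ B := by
  obtain ⟨n, rfl⟩ := hbc
  have hstab : (⟨σ, hσG⟩ : G) ∈ stabilizer G B := hB.stabilizer_le ha hσa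
  have hstab_pow : (⟨σ, hσG⟩ : G) ^ n • B = B := zpow_mem hstab n
  rw [← hstab_pow]
  exact ⟨b, hb, by simp [Subgroup.smul_def]⟩

theorem MulAction.isPreprimitive_of_isCycle_of_fixedPoints_eq_singleton {α : Type*}
    {G : Subgroup (Perm α)} [IsPretransitive G α] {σ : Perm α} (hσG : σ ∈ G)
    (hσ : σ.IsCycle) {a : α} (hfix : Function.fixedPoints σ = {a}) :
    IsPreprimitive G α := by
  have hσa : σ a = a := (Set.ext_iff.mp hfix a).mpr rfl
  have hmoved : ∀ c, σ c ≠ c ↔ c ≠ a := fun c => (Set.ext_iff.mp hfix c).not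
  refine IsPreprimitive.of_isTrivialBlock_base a fun {B} haB hB => or_iff_not_imp_left.mpr ?_
  intro hnt
  obtain ⟨b, hb, hba⟩ : ∃ b ∈ B, b ≠ a := by
    by_contra! h
    exact hnt fun x hx y hy => (h x hx).trans (h y hy).symm
  refine Set.eq_univ_of_forall fun c => ?_
  obtain rfl | hca := eq_or_ne c a
  · exact haB
  · exact hB.mem_of_sameCycle hσG haB hσa hb
      (hσ.sameCycle ((hmoved b).mpr hba) ((hmoved c).mpr hca))

theorem primitive_of_contains_d_minus_one_cycle_general (d : ℕ)
    (G : Subgroup (Equiv.Perm (Fin d)))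
    (htrans : MulAction.IsPretransitive G (Fin d))
    (σ : Equiv.Perm (Fin d)) (hσG : σ ∈ G)
    (hσ : Equiv.Perm.cycleType σ = {d - 1}) :
    ∀ Λ : Set (Fin d), MulAction.IsBlock G Λ → MulAction.IsTrivialBlock Λ := by
  obtain ⟨a, ha⟩ := Perm.exists_fixedPoints_eq_singleton (σ := σ) (by rwa [Fintype.card_fin])
  have hcycle : σ.IsCycle := Perm.card_cycleType_eq_one.mp (by simp [hσ])
  have := isPreprimitive_of_isCycle_of_fixedPoints_eq_singleton hσG hcycle ha
  exact fun Λ hΛ => this.isTrivialBlock_of_isBlock hΛ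

/-- A transitive subgroup of the symmetric group on `Fin d` (`d ≥ 3`) that contains a
`(d-1)`-cycle is primitive: every block is trivial. -/
theorem primitive_of_contains_d_minus_one_cycle (d : ℕ) (hd : 3 ≤ d)
    (G : Subgroup (Equiv.Perm (Fin d)))
    (htrans : MulAction.IsPretransitive G (Fin d))
    (σ : Equiv.Perm (Fin d)) (hσG : σ ∈ G)
    (hσ : Equiv.Perm.cycleType σ = {d - 1}) :
    ∀ Λ : Set (Fin d), MulAction.IsBlock G Λ → MulAction.IsTrivialBlock Λ :=
  primitive_of_contains_d_minus_one_cycle_general d G htrans σ hσG hσ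
end

section
/- Let d > 4 be even, let s > 2, and assume s·(d/2) is even. Then there exist permutations γ₁, …, γ_s and α of Fin d such that each γᵢ is a fixed-point-free involution (γᵢ ∘ γᵢ = id and γᵢ x ≠ x for all x, i.e. cycle type [2,…,2]), α² · γ₁ · γ₂ ⋯ γ_s = 1, and the subgroup of the symmetric group generated by {α, γ₁, …, γ_s} acts transitively and primitively on Fin d. -/
/-!
Work in `ZMod d`, which is `Fin d` by definition, and take `α` to be the rotation `x ↦ x + 1`.
Then `α²` is undone by the reflections `x ↦ -1 - x` and `x ↦ 1 - x`, and the remaining involutions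
cancel in pairs. For even `s` they are copies of `x ↦ -1 - x` conjugated by the transposition
`(0 1)`. For odd `s` admissibility gives `4 ∣ d`, so the reflection `x ↦ d/2 + 1 - x` is
fixed-point free; with the half-turn `x ↦ x + d/2` it factors `x ↦ 1 - x`, and so do the conjugates
of both by a product of three transpositions commuting with `x ↦ 1 - x`. These two conjugates
replace `x ↦ 1 - x`, and the remaining `s - 3` involutions are `x ↦ -1 - x`.

The group contains every translation, so it is transitive, and a block through `x₀` is `x₀ + H`
for the subgroup `H` of translations stabilising it; every element of the group then maps cosets
of `H` to cosets of `H`. A conjugated involution agrees with an affine map away from a few points,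
and two of its values show that it does not respect the cosets of any `H ≠ 0, ZMod d`. For the
conjugated half-turn one uses the pair `d/2 - 1, -1` when `d/2 ∈ H`, and otherwise the fact that
`H` then consists of even residues.
-/

open Equiv MulAction Pointwise

namespace AllTwosDatum

variable {d : ℕ}

section Arithmetic

lemma even_ne_odd (hd2 : 2 ∣ d) ⦃x y : ZMod d⦄ (hx : Even x) (hy : Odd y) : x ≠ y := by
  rintro rfl
  obtain ⟨r, hr⟩ := hx
  obtain ⟨k, hk⟩ := hy
  have key : ∀ a b : ZMod 2, a + a ≠ 2 * b + 1 := by decide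
  apply key (ZMod.castHom hd2 (ZMod 2) r) (ZMod.castHom hd2 (ZMod 2) k)
  simpa only [map_add, map_mul, map_one, map_ofNat] using
    congrArg (ZMod.castHom hd2 (ZMod 2)) (hr.symm.trans hk)

lemma even_or_odd [NeZero d] (z : ZMod d) : Even z ∨ Odd z := by
  rw [← ZMod.natCast_zmod_val z]
  exact (Nat.even_or_odd _).imp (·.natCast) (·.natCast)

lemma natCast_ne_zero_of_lt {k : ℕ} (hk0 : 0 < k) (hkd : k < d) : (k : ZMod d) ≠ 0 := by
  rw [Ne, ZMod.natCast_eq_zero_iff]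
  exact fun h => absurd (Nat.le_of_dvd hk0 h) (by omega)

lemma two_ne_zero_of_two_lt (hd : 2 < d) : (2 : ZMod d) ≠ 0 := by
  exact_mod_cast natCast_ne_zero_of_lt (k := 2) (by omega) (by omega)

lemma one_notMem_of_ne_top [NeZero d] {H : AddSubgroup (ZMod d)} (hH : H ≠ ⊤) :
    (1 : ZMod d) ∉ H := by
  refine fun h1 => hH (eq_top_iff.mpr fun x _ => ?_)
  rw [← ZMod.natCast_zmod_val x, ← nsmul_one]
  exact H.nsmul_mem h1 _

end Arithmetic

section Blocks

variable {A : Type*} [AddCommGroup A] {G : Subgroup (Perm A)} {Λ : Set A}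

def PreservesCosets (H : AddSubgroup A) (g : Perm A) : Prop :=
  ∀ x y, x - y ∈ H → g x - g y ∈ H

lemma isPretransitive_of_forall_addLeft_mem (hG : ∀ a, Equiv.addLeft a ∈ G) :
    IsPretransitive G A :=
  ⟨fun x y => ⟨⟨Equiv.addLeft (y - x), hG _⟩, by simp [Subgroup.smul_def]⟩⟩

lemma addLeft_smul_set (a : A) (ha : Equiv.addLeft a ∈ G) :
    (⟨Equiv.addLeft a, ha⟩ : G) • Λ = a +ᵥ Λ := by
  ext x
  simp [Set.mem_smul_set, Set.mem_vadd_set, Subgroup.smul_def]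

lemma _root_.MulAction.IsBlock.add_mem_iff (hG : ∀ a, Equiv.addLeft a ∈ G) (hΛ : IsBlock G Λ)
    {x : A} (hx : x ∈ Λ) (w : A) : x + w ∈ Λ ↔ w ∈ AddAction.stabilizer A Λ := by
  rw [AddAction.mem_stabilizer_iff, ← AllTwosDatum.addLeft_smul_set w (hG w)]
  constructor
  · intro h
    exact hΛ.smul_eq_of_mem hx (by simpa [Subgroup.smul_def, add_comm] using h)
  · intro h
    rw [← h]
    exact ⟨x, hx, by simp [Subgroup.smul_def, add_comm]⟩

lemma _root_.MulAction.IsBlock.preservesCosets_stabilizer (hG : ∀ a, Equiv.addLeft a ∈ G)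
    (hΛ : IsBlock G Λ) (hne : Λ.Nonempty) {g : Perm A} (hg : g ∈ G) :
    PreservesCosets (AddAction.stabilizer A Λ) g := by
  intro x y hxy
  obtain ⟨x₀, hx₀⟩ := hne
  -- the conjugate of `g` by translations that fixes `x₀`, hence fixes the block `Λ`
  let g' : G := ⟨Equiv.addLeft (x₀ - g y) * g * Equiv.addLeft (y - x₀),
    mul_mem (mul_mem (hG _) hg) (hG _)⟩
  have hg' : ∀ w, g' • (x₀ + w) = x₀ + (g (y + w) - g y) := by
    intro w
    simp only [g', Subgroup.smul_def, Perm.smul_def, Perm.mul_apply, coe_addLeft]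
    rw [show y - x₀ + (x₀ + w) = y + w by abel]
    abel
  have hfix : g' • Λ = Λ := by
    refine hΛ.smul_eq_of_mem hx₀ ?_
    rwa [show g' • x₀ = x₀ by simpa using hg' 0]
  rw [← hΛ.add_mem_iff hG hx₀] at hxy ⊢
  have := Set.smul_mem_smul_set (a := g') hxy
  rwa [hfix, hg', add_sub_cancel] at this

theorem isTrivialBlock_of_not_preservesCosets (hG : ∀ a, Equiv.addLeft a ∈ G)
    (hbreak : ∀ H : AddSubgroup A, H ≠ ⊥ → H ≠ ⊤ → ∃ g ∈ G, ¬ PreservesCosets H g)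
    (hΛ : IsBlock G Λ) : IsTrivialBlock Λ := by
  rcases Λ.eq_empty_or_nonempty with rfl | ⟨x₀, hx₀⟩
  · exact Or.inl Set.subsingleton_empty
  refine or_iff_not_imp_left.mpr fun hsub => by_contra fun huniv => ?_
  have hbot : AddAction.stabilizer A Λ ≠ ⊥ := by
    obtain ⟨y, hy, hyx⟩ := (Set.not_subsingleton_iff.mp hsub).exists_ne x₀
    have hmem := (hΛ.add_mem_iff hG hx₀ (y - x₀)).mp (by simpa using hy)
    exact fun h => sub_ne_zero.mpr hyx (by simpa [h] using hmem)
  have htop : AddAction.stabilizer A Λ ≠ ⊤ := fun htop =>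
    huniv (Set.eq_univ_of_forall fun y =>
      by simpa using (hΛ.add_mem_iff hG hx₀ (y - x₀)).mpr (htop ▸ AddSubgroup.mem_top _))
  obtain ⟨g, hg, hgH⟩ := hbreak _ hbot htop
  exact hgH (hΛ.preservesCosets_stabilizer hG ⟨x₀, hx₀⟩ hg)

end Blocks

section Realization

lemma addLeft_mem_of_addLeft_one_mem [NeZero d] {G : Subgroup (Perm (ZMod d))}
    (hc : Equiv.addLeft 1 ∈ G) (a : ZMod d) : Equiv.addLeft a ∈ G := by
  rw [← ZMod.natCast_zmod_val a, ← nsmul_one, ← nsmul_addLeft]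
  exact pow_mem hc _

def IsFixedPointFreeInvolution {X : Type*} (g : Perm X) : Prop :=
  g * g = 1 ∧ ∀ x, g x ≠ x

lemma IsFixedPointFreeInvolution.conj {X : Type*} {g : Perm X}
    (hg : IsFixedPointFreeInvolution g) (σ : Perm X) :
    IsFixedPointFreeInvolution (σ * g * σ⁻¹) := by
  refine ⟨?_, fun x hx => hg.2 (σ⁻¹ x) ?_⟩
  · rw [show σ * g * σ⁻¹ * (σ * g * σ⁻¹) = σ * (g * g) * σ⁻¹ by group, hg.1, mul_one,
      mul_inv_cancel]
  · rwa [Perm.mul_apply, Perm.mul_apply, ← Perm.eq_inv_iff_eq] at hx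

lemma isFixedPointFreeInvolution_subLeft (hd2 : 2 ∣ d) {a : ZMod d} (ha : Odd a) :
    IsFixedPointFreeInvolution (Equiv.subLeft a) := by
  refine ⟨by ext x; simp, fun x hx => even_ne_odd hd2 ⟨x, rfl⟩ ha ?_⟩
  rw [subLeft_apply] at hx
  linear_combination -hx

lemma isFixedPointFreeInvolution_addLeft {h : ZMod d} (hh : h + h = 0) (h0 : h ≠ 0) :
    IsFixedPointFreeInvolution (Equiv.addLeft h) :=
  ⟨by ext x; simp [← add_assoc, hh], fun x hx => h0 (by simpa using hx)⟩

lemma addLeft_one_sq_mul_subLeft :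
    Equiv.addLeft (1 : ZMod d) ^ 2 * (Equiv.subLeft (-1) * Equiv.subLeft 1) = 1 := by
  ext x
  simp only [sq, Perm.mul_apply, coe_addLeft, subLeft_apply, Perm.one_apply]
  ring

def IsPrimitiveRealization {X : Type*} {s : ℕ} (α : Perm X) (γ : Fin s → Perm X) : Prop :=
  (∀ i, IsFixedPointFreeInvolution (γ i)) ∧ α ^ 2 * (List.ofFn γ).prod = 1 ∧
    IsPretransitive (Subgroup.closure ({α} ∪ Set.range γ)) X ∧
    ∀ Λ : Set X, IsBlock (Subgroup.closure ({α} ∪ Set.range γ)) Λ → IsTrivialBlock Λ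

lemma isPrimitiveRealization_addLeft_one [NeZero d] {s : ℕ} {γ : Fin s → Perm (ZMod d)}
    (hγ : ∀ i, IsFixedPointFreeInvolution (γ i))
    (hprod : Equiv.addLeft 1 ^ 2 * (List.ofFn γ).prod = 1) (i : Fin s)
    (hi : ∀ H : AddSubgroup (ZMod d), H ≠ ⊥ → H ≠ ⊤ → ¬ PreservesCosets H (γ i)) :
    IsPrimitiveRealization (Equiv.addLeft 1) γ := by
  have hG := addLeft_mem_of_addLeft_one_mem (Subgroup.subset_closure (Or.inl rfl) :
    Equiv.addLeft 1 ∈ Subgroup.closure ({Equiv.addLeft (1 : ZMod d)} ∪ Set.range γ))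
  refine ⟨hγ, hprod, isPretransitive_of_forall_addLeft_mem hG, fun _ hΛ =>
    isTrivialBlock_of_not_preservesCosets hG (fun H hbot htop => ?_) hΛ⟩
  exact ⟨γ i, Subgroup.subset_closure (Or.inr ⟨i, rfl⟩), hi H hbot htop⟩

end Realization

section EvenCase

def twistedReflection (d : ℕ) : Perm (ZMod d) :=
  swap 0 1 * Equiv.subLeft (-1) * (swap 0 1)⁻¹

lemma twistedReflection_apply_of_ne {z : ZMod d} (h0 : z ≠ 0) (h1 : z ≠ 1) (hm1 : z ≠ -1)
    (hm2 : z ≠ -2) : twistedReflection d z = -1 - z := by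
  have h0' : -1 - z ≠ 0 := fun h => hm1 (by linear_combination -h)
  have h1' : -1 - z ≠ 1 := fun h => hm2 (by linear_combination -h)
  simp [twistedReflection, swap_apply_of_ne_of_ne, h0, h1, h0', h1']

lemma twistedReflection_apply_zero (hd : 2 < d) (hd2 : 2 ∣ d) :
    twistedReflection d 0 = -2 := by
  have h0 : (-2 : ZMod d) ≠ 0 := neg_ne_zero.mpr (two_ne_zero_of_two_lt (by omega : 2 < d))
  have h1 : (-2 : ZMod d) ≠ 1 := even_ne_odd hd2 ⟨-1, by ring⟩ odd_one
  simp only [twistedReflection, Perm.mul_apply, swap_inv, swap_apply_left, subLeft_apply]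
  rw [show (-1 : ZMod d) - 1 = -2 by ring, swap_apply_of_ne_of_ne h0 h1]

lemma not_preservesCosets_twistedReflection [NeZero d] (hd : 4 < d) (hd2 : 2 ∣ d)
    {H : AddSubgroup (ZMod d)} (hbot : H ≠ ⊥) (htop : H ≠ ⊤) :
    ¬ PreservesCosets H (twistedReflection d) := by
  have h1 := one_notMem_of_ne_top htop
  have hm1 : (-1 : ZMod d) ∉ H := fun h => h1 (by simpa using H.neg_mem h)
  obtain ⟨z, hz, hz0⟩ := H.bot_or_exists_ne_zero.resolve_left hbot
  obtain ⟨w, hw, hw0, hwm2⟩ : ∃ w ∈ H, w ≠ 0 ∧ w ≠ -2 := by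
    by_cases hz2 : z = -2
    · have h4 : (2 : ZMod d) ≠ -2 := fun h => natCast_ne_zero_of_lt (k := 4) (d := d)
        (by omega) (by omega) (by push_cast; linear_combination h)
      exact ⟨2, by simpa [hz2] using H.neg_mem hz, two_ne_zero_of_two_lt (by omega : 2 < d), h4⟩
    · exact ⟨z, hz, hz0, hz2⟩
  intro hB
  have hmem := hB w 0 (by simpa using hw)
  rw [twistedReflection_apply_of_ne hw0 (fun h => h1 (h ▸ hw)) (fun h => hm1 (h ▸ hw)) hwm2,
    twistedReflection_apply_zero (by omega) hd2] at hmem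
  exact h1 (by convert H.add_mem hmem hw using 1; ring)

def evenTuple (d k : ℕ) : Fin (2 * k + 4) → Perm (ZMod d) :=
  Fin.cons (Equiv.subLeft (-1)) (Fin.cons (Equiv.subLeft 1) fun _ => twistedReflection d)

theorem isPrimitiveRealization_evenTuple [NeZero d] (hd : 4 < d) (hd2 : 2 ∣ d) (k : ℕ) :
    IsPrimitiveRealization (Equiv.addLeft 1) (evenTuple d k) := by
  have hpa := isFixedPointFreeInvolution_subLeft hd2 (a := -1) odd_neg_one
  have hpb := isFixedPointFreeInvolution_subLeft hd2 (a := 1) odd_one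
  have hB : IsFixedPointFreeInvolution (twistedReflection d) := hpa.conj (swap 0 1)
  refine isPrimitiveRealization_addLeft_one (Fin.cases hpa (Fin.cases hpb fun _ => hB)) ?_
    (0 : Fin (2 * k + 2)).succ.succ fun H hbot htop =>
      not_preservesCosets_twistedReflection hd hd2 hbot htop
  rw [evenTuple, List.ofFn_cons, List.ofFn_cons, List.ofFn_const, List.prod_cons,
    List.prod_cons, List.prod_replicate, show 2 * k + 2 = 2 * (k + 1) by ring, pow_mul,
    sq (twistedReflection d), hB.1, one_pow, mul_one]
  exact addLeft_one_sq_mul_subLeft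

end EvenCase

section OddCase

def antipode (d : ℕ) : ZMod d := ((d / 2 : ℕ) : ZMod d)

lemma antipode_add_self (hd2 : 2 ∣ d) : antipode d + antipode d = 0 := by
  rw [antipode, ← Nat.cast_add, show d / 2 + d / 2 = d by omega, ZMod.natCast_self]

lemma even_antipode (hd4 : 4 ∣ d) : Even (antipode d) :=
  ⟨((d / 4 : ℕ) : ZMod d), by rw [antipode, ← Nat.cast_add]; congr 1; omega⟩

lemma odd_antipode_add_one (hd4 : 4 ∣ d) : Odd (antipode d + 1) :=
  (even_antipode hd4).add_one

lemma odd_antipode_sub_one (hd4 : 4 ∣ d) : Odd (antipode d - 1) :=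
  (even_antipode hd4).sub_odd odd_one

lemma antipode_mem_of_odd_mem (hd2 : 2 ∣ d) {H : AddSubgroup (ZMod d)} {z : ZMod d}
    (hz : z ∈ H) (ho : Odd z) : antipode d ∈ H := by
  obtain ⟨k, rfl⟩ := ho
  convert H.nsmul_mem hz (d / 2) using 1
  rw [nsmul_eq_mul]
  change _ = antipode d * _
  linear_combination (-k) * antipode_add_self hd2

def oddTwist (d : ℕ) : Perm (ZMod d) :=
  swap 0 (-1) * swap 1 2 * swap (antipode d) (antipode d + 1)

def twistedHalfTurn (d : ℕ) : Perm (ZMod d) :=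
  oddTwist d * Equiv.addLeft (antipode d) * (oddTwist d)⁻¹

def twistedAntipodalReflection (d : ℕ) : Perm (ZMod d) :=
  oddTwist d * Equiv.subLeft (antipode d + 1) * (oddTwist d)⁻¹

lemma oddTwist_apply_of_even (hd4 : 4 ∣ d) {w : ZMod d} (hw : Even w) (h0 : w ≠ 0) (h2 : w ≠ 2)
    (hh : w ≠ antipode d) : oddTwist d w = w := by
  have hne := even_ne_odd (dvd_trans (by norm_num) hd4)
  simp only [oddTwist, Perm.mul_apply]
  rw [swap_apply_of_ne_of_ne hh (hne hw (odd_antipode_add_one hd4)),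
    swap_apply_of_ne_of_ne (hne hw odd_one) h2, swap_apply_of_ne_of_ne h0 (hne hw odd_neg_one)]

lemma twistedHalfTurn_apply_of_even (hd4 : 4 ∣ d) {w : ZMod d} (hw : Even w) (h0 : w ≠ 0)
    (h2 : w ≠ 2) (hh : w ≠ antipode d) (hh2 : w ≠ antipode d + 2) :
    twistedHalfTurn d w = antipode d + w := by
  have hanti := antipode_add_self (dvd_trans (by norm_num) hd4)
  have hinv : (oddTwist d)⁻¹ w = w :=
    Perm.inv_eq_iff_eq.mpr (oddTwist_apply_of_even hd4 hw h0 h2 hh).symm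
  simp only [twistedHalfTurn, Perm.mul_apply, coe_addLeft]
  rw [hinv, oddTwist_apply_of_even hd4 ((even_antipode hd4).add hw)
    (fun e => hh (by linear_combination e - hanti))
    (fun e => hh2 (by linear_combination e - hanti)) (fun e => h0 (by linear_combination e))]

lemma antipode_ne_zero (hd : 2 ≤ d) : antipode d ≠ 0 :=
  natCast_ne_zero_of_lt (by omega) (by omega)

lemma antipode_add_two_ne_zero (hd : 4 < d) : antipode d + 2 ≠ 0 := by
  simpa [antipode] using natCast_ne_zero_of_lt (k := d / 2 + 2) (d := d) (by omega) (by omega)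

lemma antipode_sub_two_ne_zero (hd : 6 ≤ d) : antipode d - 2 ≠ 0 := by
  have := natCast_ne_zero_of_lt (k := d / 2 - 2) (d := d) (by omega) (by omega)
  rwa [Nat.cast_sub (by omega)] at this

variable (hd : 4 < d) (hd4 : 4 ∣ d)
include hd hd4

lemma oddTwist_apply_zero : oddTwist d 0 = -1 := by
  have hne := even_ne_odd (dvd_trans (by norm_num) hd4)
  simp only [oddTwist, Perm.mul_apply]
  rw [swap_apply_of_ne_of_ne (antipode_ne_zero (by omega : 2 ≤ d)).symm
      (hne Even.zero (odd_antipode_add_one hd4)),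
    swap_apply_of_ne_of_ne (hne Even.zero odd_one) (two_ne_zero_of_two_lt (by omega : 2 < d)).symm,
    swap_apply_left]

lemma oddTwist_apply_neg_one : oddTwist d (-1) = 0 := by
  have hne := even_ne_odd (dvd_trans (by norm_num) hd4)
  simp only [oddTwist, Perm.mul_apply]
  rw [swap_apply_of_ne_of_ne (hne (even_antipode hd4) odd_neg_one).symm
      (fun e => antipode_add_two_ne_zero hd (by linear_combination -e)),
    swap_apply_of_ne_of_ne
      (fun e => two_ne_zero_of_two_lt (by omega : 2 < d) (by linear_combination -e))
      (hne even_two odd_neg_one).symm,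
    swap_apply_right]

lemma oddTwist_apply_antipode : oddTwist d (antipode d) = antipode d + 1 := by
  have hne := even_ne_odd (dvd_trans (by norm_num) hd4)
  simp only [oddTwist, Perm.mul_apply]
  rw [swap_apply_left,
    swap_apply_of_ne_of_ne (fun e => antipode_ne_zero (by omega : 2 ≤ d) (by linear_combination e))
      (hne even_two (odd_antipode_add_one hd4)).symm,
    swap_apply_of_ne_of_ne (hne Even.zero (odd_antipode_add_one hd4)).symm
      (fun e => antipode_add_two_ne_zero hd (by linear_combination e))]

lemma oddTwist_apply_antipode_sub_one : oddTwist d (antipode d - 1) = antipode d - 1 := by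
  have hne := even_ne_odd (dvd_trans (by norm_num) hd4)
  simp only [oddTwist, Perm.mul_apply]
  rw [swap_apply_of_ne_of_ne (hne (even_antipode hd4) (odd_antipode_sub_one hd4)).symm
      (fun e => two_ne_zero_of_two_lt (by omega : 2 < d) (by linear_combination -e)),
    swap_apply_of_ne_of_ne (fun e => antipode_sub_two_ne_zero (by omega : 6 ≤ d)
        (by linear_combination e))
      (hne even_two (odd_antipode_sub_one hd4)).symm,
    swap_apply_of_ne_of_ne (hne Even.zero (odd_antipode_sub_one hd4)).symm
      (fun e => antipode_ne_zero (by omega : 2 ≤ d) (by linear_combination e))]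

lemma conj_oddTwist_subLeft_one :
    oddTwist d * Equiv.subLeft 1 * (oddTwist d)⁻¹ = Equiv.subLeft 1 := by
  have hd2 : 2 ∣ d := dvd_trans (by norm_num) hd4
  have hne := even_ne_odd hd2
  have h2 := two_ne_zero_of_two_lt (by omega : 2 < d)
  have hnodup : [(0 : ZMod d), -1, 1, 2].Nodup := by
    simp only [List.nodup_cons, List.mem_cons, List.not_mem_nil, or_false, not_or,
      List.nodup_nil, and_true]
    exact ⟨⟨hne Even.zero odd_neg_one, hne Even.zero odd_one, h2.symm⟩,
      ⟨fun e => h2 (by linear_combination -e), (hne even_two odd_neg_one).symm⟩,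
      (hne even_two odd_one).symm, not_false⟩
  have hconj : ∀ a b : ZMod d,
      Equiv.subLeft 1 * swap a b * (Equiv.subLeft 1)⁻¹ = swap (1 - a) (1 - b) :=
    fun a b => (swap_apply_apply _ a b).symm
  -- conjugation by `x ↦ 1 - x` swaps the first two transpositions and fixes the third
  have hcomm : Equiv.subLeft 1 * oddTwist d * (Equiv.subLeft 1)⁻¹ = oddTwist d := by
    have hh := antipode_add_self hd2
    rw [oddTwist, show ∀ f a b c : Perm (ZMod d), f * (a * b * c) * f⁻¹ =
        f * a * f⁻¹ * (f * b * f⁻¹) * (f * c * f⁻¹) by intros; group, hconj, hconj, hconj,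
      show (1 : ZMod d) - antipode d = antipode d + 1 by linear_combination -hh,
      show (1 : ZMod d) - (antipode d + 1) = antipode d by linear_combination -hh,
      swap_comm (antipode d + 1), (Perm.disjoint_swap_swap hnodup).commute.eq]
    norm_num
  rw [mul_inv_eq_iff_eq_mul]
  exact (mul_inv_eq_iff_eq_mul.mp hcomm).symm

lemma twistedHalfTurn_apply_neg_one : twistedHalfTurn d (-1) = antipode d + 1 := by
  have hinv : (oddTwist d)⁻¹ (-1) = 0 :=
    Perm.inv_eq_iff_eq.mpr (oddTwist_apply_zero hd hd4).symm
  simp only [twistedHalfTurn, Perm.mul_apply, coe_addLeft]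
  rw [hinv, add_zero, oddTwist_apply_antipode hd hd4]

lemma twistedHalfTurn_apply_antipode_sub_one : twistedHalfTurn d (antipode d - 1) = 0 := by
  have hinv : (oddTwist d)⁻¹ (antipode d - 1) = antipode d - 1 :=
    Perm.inv_eq_iff_eq.mpr (oddTwist_apply_antipode_sub_one hd hd4).symm
  simp only [twistedHalfTurn, Perm.mul_apply, coe_addLeft]
  rw [hinv, show antipode d + (antipode d - 1) = -1 by
      linear_combination antipode_add_self (dvd_trans (by norm_num) hd4),
    oddTwist_apply_neg_one hd hd4]

lemma twistedHalfTurn_apply_zero : twistedHalfTurn d 0 = antipode d - 1 := by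
  have hinv : (oddTwist d)⁻¹ 0 = -1 :=
    Perm.inv_eq_iff_eq.mpr (oddTwist_apply_neg_one hd hd4).symm
  simp only [twistedHalfTurn, Perm.mul_apply, coe_addLeft]
  rw [hinv, ← sub_eq_add_neg, oddTwist_apply_antipode_sub_one hd hd4]

lemma exists_even_mem_of_antipode_notMem [NeZero d] {H : AddSubgroup (ZMod d)} (hbot : H ≠ ⊥)
    (hh : antipode d ∉ H) : ∃ w ∈ H, Even w ∧ w ≠ 0 ∧ w ≠ 2 ∧ w ≠ antipode d ∧
      w ≠ antipode d + 2 := by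
  have hd2 : 2 ∣ d := dvd_trans (by norm_num) hd4
  obtain ⟨z, hz, hz0⟩ := H.bot_or_exists_ne_zero.resolve_left hbot
  have hze : Even z :=
    (even_or_odd z).resolve_right fun ho => hh (antipode_mem_of_odd_mem hd2 hz ho)
  by_cases hz2 : z = 2 ∨ z = antipode d + 2
  · have h4 : z + z = 4 := by
      rcases hz2 with rfl | rfl
      · norm_num
      · linear_combination antipode_add_self hd2
    refine ⟨z + z, H.add_mem hz hz, ⟨z, rfl⟩, ?_, ?_, fun e => hh (e ▸ H.add_mem hz hz), ?_⟩
      <;> rw [h4]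
    · exact_mod_cast natCast_ne_zero_of_lt (k := 4) (d := d) (by omega) hd
    · exact fun e => two_ne_zero_of_two_lt (by omega : 2 < d) (by linear_combination e)
    · exact fun e => antipode_sub_two_ne_zero (by omega : 6 ≤ d) (by linear_combination -e)
  · rw [not_or] at hz2
    exact ⟨z, hz, hze, hz0, hz2.1, fun e => hh (e ▸ hz), hz2.2⟩

lemma not_preservesCosets_twistedHalfTurn [NeZero d] {H : AddSubgroup (ZMod d)}
    (hbot : H ≠ ⊥) (htop : H ≠ ⊤) : ¬ PreservesCosets H (twistedHalfTurn d) := by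
  have h1 := one_notMem_of_ne_top htop
  intro hY
  by_cases hh : antipode d ∈ H
  · have hmem := hY (antipode d - 1) (-1) (by simpa using hh)
    rw [twistedHalfTurn_apply_antipode_sub_one hd hd4, twistedHalfTurn_apply_neg_one hd hd4]
      at hmem
    exact h1 (by convert H.neg_mem (H.add_mem hmem hh) using 1; ring)
  · obtain ⟨w, hw, hwe, hw0, hw2, hwh, hwh2⟩ := exists_even_mem_of_antipode_notMem hd hd4 hbot hh
    have hmem := hY w 0 (by simpa using hw)
    rw [twistedHalfTurn_apply_of_even hd4 hwe hw0 hw2 hwh hwh2,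
      twistedHalfTurn_apply_zero hd hd4] at hmem
    exact h1 (by convert H.sub_mem hmem hw using 1; ring)

def oddTuple (d k : ℕ) : Fin (2 * k + 3) → Perm (ZMod d) :=
  Fin.cons (Equiv.subLeft (-1)) (Fin.cons (twistedAntipodalReflection d)
    (Fin.cons (twistedHalfTurn d) fun _ => Equiv.subLeft (-1)))

theorem isPrimitiveRealization_oddTuple [NeZero d] (k : ℕ) :
    IsPrimitiveRealization (Equiv.addLeft 1) (oddTuple d k) := by
  have hd2 : 2 ∣ d := dvd_trans (by norm_num) hd4
  have hpa := isFixedPointFreeInvolution_subLeft hd2 (a := -1) odd_neg_one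
  have hX : IsFixedPointFreeInvolution (twistedAntipodalReflection d) :=
    (isFixedPointFreeInvolution_subLeft hd2 (odd_antipode_add_one hd4)).conj _
  have hY : IsFixedPointFreeInvolution (twistedHalfTurn d) :=
    (isFixedPointFreeInvolution_addLeft (antipode_add_self hd2)
      (antipode_ne_zero (by omega : 2 ≤ d))).conj _
  have hXY : twistedAntipodalReflection d * twistedHalfTurn d = Equiv.subLeft 1 := by
    have hrt : Equiv.subLeft (antipode d + 1) * Equiv.addLeft (antipode d) = Equiv.subLeft 1 := by
      ext x
      simp only [Perm.mul_apply, coe_addLeft, subLeft_apply]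
      ring
    rw [twistedAntipodalReflection, twistedHalfTurn, show ∀ a b c : Perm (ZMod d),
      a * b * a⁻¹ * (a * c * a⁻¹) = a * (b * c) * a⁻¹ by intros; group, hrt,
      conj_oddTwist_subLeft_one hd hd4]
  refine isPrimitiveRealization_addLeft_one (Fin.cases hpa (Fin.cases hX (Fin.cases hY
    fun _ => hpa))) ?_ (0 : Fin (2 * k + 1)).succ.succ fun H hbot htop =>
      not_preservesCosets_twistedHalfTurn hd hd4 hbot htop
  rw [oddTuple, List.ofFn_cons, List.ofFn_cons, List.ofFn_cons, List.ofFn_const,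
    List.prod_cons, List.prod_cons, List.prod_cons, List.prod_replicate, pow_mul,
    sq (Equiv.subLeft (-1)), hpa.1, one_pow, mul_one, ← mul_assoc, hXY]
  exact addLeft_one_sq_mul_subLeft

end OddCase

theorem exists_isPrimitiveRealization {s : ℕ} (hd : 4 < d) (hdeven : Even d) (hs : 2 < s)
    (hparity : Even (s * (d / 2))) :
    ∃ (γ : Fin s → Perm (ZMod d)) (α : Perm (ZMod d)), IsPrimitiveRealization α γ := by
  have : NeZero d := ⟨by omega⟩
  have hd2 : 2 ∣ d := even_iff_two_dvd.mp hdeven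
  rcases Nat.even_or_odd s with ⟨t, ht⟩ | ⟨t, ht⟩
  · obtain ⟨k, rfl⟩ : ∃ k, s = 2 * k + 4 := ⟨t - 2, by omega⟩
    exact ⟨_, _, isPrimitiveRealization_evenTuple hd hd2 k⟩
  · obtain ⟨k, rfl⟩ : ∃ k, s = 2 * k + 3 := ⟨t - 1, by omega⟩
    have hd4 : 4 ∣ d := by
      obtain ⟨r, hr⟩ := (Nat.even_mul.mp hparity).resolve_left
        (Nat.not_even_iff_odd.mpr ⟨k + 1, by ring⟩)
      exact ⟨r, by omega⟩
    exact ⟨_, _, isPrimitiveRealization_oddTuple hd hd4 k⟩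

end AllTwosDatum

/-- For even `d > 4` and `s > 2` with `s * (d / 2)` even, the branch datum consisting of `s`
copies of `[2,…,2]` is realizable by a transitive and primitive Hurwitz representation:
there are `s` fixed-point-free involutions `γ i` and a permutation `α` with
`α² γ₁ ⋯ γ_s = 1` generating a transitive primitive subgroup. -/
theorem all_twos_datum_realizable_indecomposable
    (d s : ℕ) (hd : 4 < d) (hdeven : Even d) (hs : 2 < s)
    (hparity : Even (s * (d / 2))) :
    ∃ (γ : Fin s → Equiv.Perm (Fin d)) (α : Equiv.Perm (Fin d)),
      (∀ i, (γ i) * (γ i) = 1 ∧ ∀ x : Fin d, γ i x ≠ x) ∧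
      α ^ 2 * (List.ofFn γ).prod = 1 ∧
      MulAction.IsPretransitive (Subgroup.closure ({α} ∪ Set.range γ)) (Fin d) ∧
      (∀ Λ : Set (Fin d),
        MulAction.IsBlock (Subgroup.closure ({α} ∪ Set.range γ)) Λ →
        MulAction.IsTrivialBlock Λ) := by
  obtain ⟨n, rfl⟩ : ∃ n, d = n + 1 := ⟨d - 1, by omega⟩
  -- `ZMod (n + 1)` is `Fin (n + 1)` by definition
  exact AllTwosDatum.exists_isPrimitiveRealization hd hdeven hs hparity
end

section
/- Let d ≥ 4 be even and let α, β be fixed-point-free involutions of Fin d (α∘α = id, β∘β = id, and α x ≠ x, β x ≠ x for all x). If the subgroup G = ⟨α, β⟩ of the symmetric group acts transitively on Fin d, then G is imprimitive: there exists a block Λ of G with 1 < |Λ| < d. -/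
/-!
Put `ρ = α * β`. Both `α` and `β` conjugate `ρ` to `ρ⁻¹`, so every cyclic group `⟨ρ ^ k⟩` is
normalized by `G = ⟨α, β⟩` and its orbits are blocks of `G`. Let `p` be the length of the
`ρ`-orbit of `0`. If `1 < p < d`, that orbit is the block. If `p = d`, the `ρ²`-orbit of `0` has
`d / 2` points. If `p = 1`, then `β 0 = α 0`, so the pair `{0, α 0}` is `G`-invariant.
-/

open Function MulAction Subgroup
open scoped Pointwise

namespace MulAction

variable {G X : Type*} [Group G] [MulAction G X]

theorem ncard_orbit_zpowers (g : G) (x : X) :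
    (orbit (zpowers g) x).ncard = minimalPeriod (g • ·) x := by
  rw [← Nat.card_coe_set_eq, Nat.card_congr (orbitZPowersEquiv g x), Nat.card_zmod]

theorem smul_orbit_eq_orbit_smul_of_mem_normalizer {N : Subgroup G} {g : G}
    (hg : g ∈ normalizer (N : Set G)) (x : X) : g • orbit N x = orbit N (g • x) := by
  ext y
  simp only [Set.mem_smul_set, mem_orbit_iff, Subtype.exists]
  constructor
  · rintro ⟨_, ⟨n, hn, rfl⟩, rfl⟩
    exact ⟨g * n * g⁻¹, (mem_normalizer_iff.mp hg n).mp hn, by simp [smul_smul]⟩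
  · rintro ⟨n, hn, rfl⟩
    refine ⟨(g⁻¹ * n * g) • x, ⟨g⁻¹ * n * g, ?_, rfl⟩, by simp [smul_smul, ← mul_assoc]⟩
    exact (mem_normalizer_iff''.mp hg n).mp hn

theorem isBlock_orbit_of_le_normalizer {H N : Subgroup G} (hHN : H ≤ normalizer (N : Set G))
    (x : X) : IsBlock H (orbit N x) := by
  rw [isBlock_iff_smul_eq_or_disjoint]
  rintro ⟨h, hh⟩
  change h • orbit N x = _ ∨ Disjoint (h • orbit N x) _
  rw [smul_orbit_eq_orbit_smul_of_mem_normalizer (hHN hh)]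
  exact orbit.eq_or_disjoint _ _

theorem isBlock_of_le_stabilizer {H : Subgroup G} {B : Set X} (hH : H ≤ stabilizer G B) :
    IsBlock H B :=
  IsFixedBlock.isBlock fun h ↦ hH h.2

theorem smul_pair_eq_self {g : G} {x y : X} (hx : g • x = y) (hy : g • y = x) :
    g • ({x, y} : Set X) = {x, y} := by
  rw [Set.smul_set_insert, Set.smul_set_singleton, hx, hy, Set.pair_comm]

theorem isBlock_closure_pair_of_mul_smul_eq {a b : G} {x : X} (ha : a * a = 1) (hb : b * b = 1)
    (hx : (a * b) • x = x) : IsBlock (closure {a, b}) {x, a • x} := by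
  have haa : a • a • x = x := by rw [smul_smul, ha, one_smul]
  have hbx : b • x = a • x := by
    rw [← inv_eq_of_mul_eq_one_left ha, eq_inv_smul_iff, smul_smul, hx]
  have hba : b • a • x = x := by rw [← hbx, smul_smul, hb, one_smul]
  refine isBlock_of_le_stabilizer ?_
  rw [closure_le, Set.insert_subset_iff, Set.singleton_subset_iff]
  exact ⟨smul_pair_eq_self rfl haa, smul_pair_eq_self hbx hba⟩

end MulAction

namespace Subgroup

variable {G : Type*} [Group G] {a b : G}

theorem mem_normalizer_zpowers_of_conj_eq_inv {c : G} (h : a * c * a⁻¹ = c⁻¹) :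
    a ∈ normalizer (zpowers c : Set G) := by
  rw [mem_normalizer_iff_map_conj_eq, MonoidHom.map_zpowers]
  simp [MulAut.conj_apply, h]

theorem closure_pair_le_normalizer_zpowers_mul_pow (ha : a * a = 1) (hb : b * b = 1) (k : ℕ) :
    closure {a, b} ≤ normalizer (zpowers ((a * b) ^ k) : Set G) := by
  have ha' : a⁻¹ = a := inv_eq_of_mul_eq_one_left ha
  have hb' : b⁻¹ = b := inv_eq_of_mul_eq_one_left hb
  have hconj : ∀ g ∈ ({a, b} : Set G), g * (a * b) * g⁻¹ = (a * b)⁻¹ := by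
    rintro g (rfl | rfl)
    · rw [← mul_assoc, ha, one_mul, ha', mul_inv_rev, ha', hb']
    · rw [hb', mul_inv_rev, ha', hb', mul_assoc, mul_assoc, hb, mul_one]
  rw [closure_le]
  intro g hg
  exact mem_normalizer_zpowers_of_conj_eq_inv (by rw [← conj_pow, hconj g hg, inv_pow])

end Subgroup

theorem imprimitive_of_two_fixed_point_free_involutions_general
    (d : ℕ) (hd : 4 ≤ d) (hdeven : Even d)
    (α β : Equiv.Perm (Fin d))
    (hα : α * α = 1) (hα' : ∀ x : Fin d, α x ≠ x)
    (hβ : β * β = 1) :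
    ∃ Λ : Set (Fin d),
      MulAction.IsBlock (Subgroup.closure {α, β}) Λ ∧ 1 < Λ.ncard ∧ Λ.ncard < d := by
  have : NeZero d := ⟨by omega⟩
  have hblock (k : ℕ) : IsBlock (closure {α, β}) (orbit (zpowers ((α * β) ^ k)) (0 : Fin d)) :=
    isBlock_orbit_of_le_normalizer (closure_pair_le_normalizer_zpowers_mul_pow hα hβ k) 0
  set p := minimalPeriod ((α * β) • ·) (0 : Fin d) with hp
  have hp_pos : 0 < p := NeZero.pos _
  have hp_le : p ≤ d := minimalPeriod_le_card.trans_eq (Fintype.card_fin d)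
  by_cases hp_one : p = 1
  · refine ⟨_, isBlock_closure_pair_of_mul_smul_eq hα hβ
      (minimalPeriod_eq_one_iff_isFixedPt.mp hp_one), ?_⟩
    rw [Set.ncard_pair (a := 0) (b := α • 0) (hα' 0).symm]
    omega
  obtain hp_lt | hp_eq := hp_le.lt_or_eq
  · refine ⟨_, hblock 1, ?_⟩
    rw [pow_one, ncard_orbit_zpowers]
    omega
  · refine ⟨_, hblock 2, ?_⟩
    rw [ncard_orbit_zpowers, ← smul_iterate, minimalPeriod_iterate_eq_div_gcd two_ne_zero, ← hp,
      hp_eq, Nat.gcd_eq_right (even_iff_two_dvd.mp hdeven)]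
    omega

/-- A transitive subgroup of the symmetric group on `Fin d` (`d ≥ 4` even) generated by two
fixed-point-free involutions is imprimitive: it has a nontrivial block. -/
theorem imprimitive_of_two_fixed_point_free_involutions
    (d : ℕ) (hd : 4 ≤ d) (hdeven : Even d)
    (α β : Equiv.Perm (Fin d))
    (hα : α * α = 1) (hα' : ∀ x : Fin d, α x ≠ x)
    (hβ : β * β = 1) (hβ' : ∀ x : Fin d, β x ≠ x)
    (htrans : MulAction.IsPretransitive (Subgroup.closure {α, β}) (Fin d)) :
    ∃ Λ : Set (Fin d),
      MulAction.IsBlock (Subgroup.closure {α, β}) Λ ∧ 1 < Λ.ncard ∧ Λ.ncard < d :=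
  imprimitive_of_two_fixed_point_free_involutions_general d hd hdeven α β hα hα' hβ
end

section
/- Let d ≥ 4 be even. Suppose α, β and α′, β′ are two pairs of fixed-point-free involutions of Fin d such that both subgroups ⟨α, β⟩ and ⟨α′, β′⟩ act transitively on Fin d. Then the pairs are simultaneously conjugate: there exists a permutation λ of Fin d with λ ∘ α ∘ λ⁻¹ = α′ and λ ∘ β ∘ λ⁻¹ = β′. -/
/-! Put `σ = β * α`; the relations `α² = β² = 1` give `α σ α = σ⁻¹`. Let `m` be the length of the
`σ`-cycle of a point `x`. The maps `k ↦ σ^k x` and `k ↦ α σ^(-k) x` parametrize two `σ`-cycles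
by `ZMod m`. They are disjoint, since a common point would, after a shift along `σ`, give a fixed
point of `α` or of `β`, and by transitivity they cover everything. In these coordinates `α` and
`β` act on `ZMod m × Bool` as the reflections `k ↦ -k` and `k ↦ 1 - k` exchanging the two copies,
and counting gives `2 m = d`. So both pairs are conjugate to the same model pair. -/

open Equiv Function MulAction
open scoped Pointwise

section CycleParam

variable {X : Type*} (σ : Perm X) (x : X)

noncomputable def cycleParam (k : ZMod (minimalPeriod (σ • ·) x)) : X :=
  (orbitZPowersEquiv σ x).symm k

theorem cycleParam_injective : Injective (cycleParam σ x) :=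
  Subtype.val_injective.comp (orbitZPowersEquiv σ x).symm.injective

theorem cycleParam_intCast (n : ℤ) : cycleParam σ x n = (σ ^ n) x :=
  congrArg Subtype.val (orbitZPowersEquiv_symm_apply' σ x n)

theorem apply_cycleParam (k : ZMod (minimalPeriod (σ • ·) x)) :
    σ (cycleParam σ x k) = cycleParam σ x (k + 1) := by
  obtain ⟨n, rfl⟩ := ZMod.intCast_surjective k
  rw [← Int.cast_one, ← Int.cast_add, cycleParam_intCast, cycleParam_intCast, add_comm,
    zpow_one_add, Perm.mul_apply]

end CycleParam

theorem surjective_of_semiconj_of_isPretransitive {X Y : Type*} [Nonempty Y]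
    {S : Set (Perm X)} [IsPretransitive (Subgroup.closure S) X] {ρ : Y → X}
    (hρ : ∀ g ∈ S, ∃ h : Perm Y, Semiconj ρ h g) : Surjective ρ := by
  have hS : Subgroup.closure S ≤ stabilizer (Perm X) (Set.range ρ) := by
    refine (Subgroup.closure_le _).2 fun g hg ↦ ?_
    obtain ⟨h, hh⟩ := hρ g hg
    rw [SetLike.mem_coe, mem_stabilizer_iff, Set.smul_set_range]
    exact (congrArg Set.range hh.comp_eq.symm).trans (h.surjective.range_comp ρ)
  intro x
  obtain ⟨y⟩ := ‹Nonempty Y›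
  obtain ⟨g, rfl⟩ := exists_smul_eq (Subgroup.closure S) (ρ y) x
  have hg : (g : Perm X) • Set.range ρ = Set.range ρ := hS g.2
  exact hg.subset ⟨ρ y, ⟨y, rfl⟩, rfl⟩

def swapReflection {m : ℕ} (c : ZMod m) : Perm (ZMod m × Bool) :=
  (Equiv.subLeft c).prodCongr Equiv.boolNot

@[simp]
theorem swapReflection_apply {m : ℕ} (c k : ZMod m) (b : Bool) :
    swapReflection c (k, b) = (c - k, !b) := rfl

theorem Equiv.Perm.apply_apply_of_mul_self_eq_one {X : Type*} {σ : Perm X} (h : σ * σ = 1)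
    (x : X) : σ (σ x) = x := by
  rw [← Perm.mul_apply, h, Perm.one_apply]

section Involutions

variable {X : Type*} {α β : Perm X}

theorem mul_zpow_eq_zpow_neg_mul (hα : α * α = 1) (hβ : β * β = 1) (n : ℤ) :
    α * (β * α) ^ n = (β * α) ^ (-n) * α := by
  have hα' : α⁻¹ = α := inv_eq_of_mul_eq_one_left hα
  have hβ' : β⁻¹ = β := inv_eq_of_mul_eq_one_left hβ
  have hconj : α * (β * α) * α⁻¹ = (β * α)⁻¹ := by
    rw [hα', mul_inv_rev, hα', hβ', mul_assoc, mul_assoc, hα, mul_one]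
  rw [zpow_neg, ← inv_zpow, ← hconj, conj_zpow, hα', mul_assoc, hα, mul_one]

theorem apply_zpow_apply_ne_zpow_apply (hα : α * α = 1) (hβ : β * β = 1)
    (hαf : ∀ x, α x ≠ x) (hβf : ∀ x, β x ≠ x) (x : X) (a b : ℤ) :
    α (((β * α) ^ a) x) ≠ ((β * α) ^ b) x := by
  intro h
  have hshift (t : ℤ) : α (((β * α) ^ (a + t)) x) = ((β * α) ^ (b - t)) x := by
    rw [add_comm, zpow_add, Perm.mul_apply, ← Perm.mul_apply α, mul_zpow_eq_zpow_neg_mul hα hβ,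
      Perm.mul_apply, h, ← Perm.mul_apply, ← zpow_add, neg_add_eq_sub]
  obtain ⟨s, hs | hs⟩ := Int.even_or_odd' (a + b)
  · apply hαf (((β * α) ^ s) x)
    simpa [show b - (s - a) = s by omega] using hshift (s - a)
  · apply hβf (α (((β * α) ^ s) x))
    have hs' := hshift (s - a)
    rw [show a + (s - a) = s by omega, show b - (s - a) = 1 + s by omega, zpow_one_add,
      Perm.mul_apply, Perm.mul_apply] at hs'
    exact hs'.symm

variable (α β) in
noncomputable def dihedralParam (x : X) : ZMod (minimalPeriod ((β * α) • ·) x) × Bool → X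
  | (k, false) => cycleParam (β * α) x k
  | (k, true) => α (cycleParam (β * α) x (-k))

theorem semiconj_dihedralParam_swapReflection_zero (hα : α * α = 1) (x : X) :
    Semiconj (dihedralParam α β x) (swapReflection 0) α := by
  rintro ⟨k, _ | _⟩ <;>
    simp only [swapReflection_apply, Bool.not_false, Bool.not_true, dihedralParam]
  · rw [zero_sub, neg_neg]
  · rw [zero_sub, Perm.apply_apply_of_mul_self_eq_one hα]

theorem semiconj_dihedralParam_swapReflection_one (hβ : β * β = 1) (x : X) :
    Semiconj (dihedralParam α β x) (swapReflection 1) β := by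
  rintro ⟨k, _ | _⟩ <;>
    simp only [swapReflection_apply, Bool.not_false, Bool.not_true, dihedralParam]
  · rw [neg_sub, ← sub_add_cancel k 1, ← apply_cycleParam, add_sub_cancel_right, Perm.mul_apply,
      Perm.apply_apply_of_mul_self_eq_one hβ]
  · rw [← Perm.mul_apply, apply_cycleParam, neg_add_eq_sub]

theorem dihedralParam_injective (hα : α * α = 1) (hβ : β * β = 1)
    (hαf : ∀ x, α x ≠ x) (hβf : ∀ x, β x ≠ x) (x : X) : Injective (dihedralParam α β x) := by
  have hne (i j) : α (cycleParam (β * α) x i) ≠ cycleParam (β * α) x j := by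
    obtain ⟨a, rfl⟩ := ZMod.intCast_surjective i
    obtain ⟨b, rfl⟩ := ZMod.intCast_surjective j
    rw [cycleParam_intCast, cycleParam_intCast]
    exact apply_zpow_apply_ne_zpow_apply hα hβ hαf hβf x a b
  rintro ⟨i, _ | _⟩ ⟨j, _ | _⟩ h <;> simp only [dihedralParam] at h
  · rw [cycleParam_injective _ _ h]
  · exact absurd h.symm (hne _ _)
  · exact absurd h (hne _ _)
  · rw [neg_inj.1 (cycleParam_injective _ _ (α.injective h))]

theorem exists_equiv_permCongr_swapReflection (hα : α * α = 1) (hβ : β * β = 1)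
    (hαf : ∀ x, α x ≠ x) (hβf : ∀ x, β x ≠ x) [IsPretransitive (Subgroup.closure {α, β}) X]
    (x : X) : ∃ (m : ℕ) (e : ZMod m × Bool ≃ X),
      e.permCongr (swapReflection 0) = α ∧ e.permCongr (swapReflection 1) = β := by
  have hsurj : Surjective (dihedralParam α β x) := by
    refine surjective_of_semiconj_of_isPretransitive (S := {α, β}) ?_
    rintro g (rfl | rfl)
    exacts [⟨_, semiconj_dihedralParam_swapReflection_zero hα x⟩,
      ⟨_, semiconj_dihedralParam_swapReflection_one hβ x⟩]
  let e := Equiv.ofBijective _ ⟨dihedralParam_injective hα hβ hαf hβf x, hsurj⟩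
  have hpermCongr {p : Perm _} {g : Perm X} (h : Semiconj e p g) : e.permCongr p = g :=
    Equiv.ext fun y ↦ (h (e.symm y)).trans (congrArg g (e.apply_symm_apply y))
  exact ⟨_, e, hpermCongr (semiconj_dihedralParam_swapReflection_zero hα x),
    hpermCongr (semiconj_dihedralParam_swapReflection_one hβ x)⟩

end Involutions

theorem pairs_of_fixed_point_free_involutions_conjugate_general
    (d : ℕ) (hd : 4 ≤ d)
    (α β α' β' : Equiv.Perm (Fin d))
    (hα : α * α = 1) (hαf : ∀ x : Fin d, α x ≠ x)
    (hβ : β * β = 1) (hβf : ∀ x : Fin d, β x ≠ x)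
    (hα' : α' * α' = 1) (hα'f : ∀ x : Fin d, α' x ≠ x)
    (hβ' : β' * β' = 1) (hβ'f : ∀ x : Fin d, β' x ≠ x)
    (htrans : MulAction.IsPretransitive (Subgroup.closure {α, β}) (Fin d))
    (htrans' : MulAction.IsPretransitive (Subgroup.closure {α', β'}) (Fin d)) :
    ∃ l : Equiv.Perm (Fin d), l * α * l⁻¹ = α' ∧ l * β * l⁻¹ = β' := by
  let x : Fin d := ⟨0, by omega⟩
  obtain ⟨m, e, rfl, rfl⟩ := exists_equiv_permCongr_swapReflection hα hβ hαf hβf x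
  obtain ⟨m', e', rfl, rfl⟩ := exists_equiv_permCongr_swapReflection hα' hβ' hα'f hβ'f x
  have hcard (n : ℕ) (f : ZMod n × Bool ≃ Fin d) : n * 2 = d := by
    simpa using Nat.card_congr f
  obtain rfl : m = m' := by have := hcard m e; have := hcard m' e'; omega
  refine ⟨e.symm.trans e', ?_, ?_⟩ <;> ext y <;> simp [Perm.mul_apply]

/-- Two pairs of fixed-point-free involutions of `Fin d` (`d ≥ 4` even) each generating
a transitive subgroup are simultaneously conjugate. -/
theorem pairs_of_fixed_point_free_involutions_conjugate
    (d : ℕ) (hd : 4 ≤ d) (hdeven : Even d)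
    (α β α' β' : Equiv.Perm (Fin d))
    (hα : α * α = 1) (hαf : ∀ x : Fin d, α x ≠ x)
    (hβ : β * β = 1) (hβf : ∀ x : Fin d, β x ≠ x)
    (hα' : α' * α' = 1) (hα'f : ∀ x : Fin d, α' x ≠ x)
    (hβ' : β' * β' = 1) (hβ'f : ∀ x : Fin d, β' x ≠ x)
    (htrans : MulAction.IsPretransitive (Subgroup.closure {α, β}) (Fin d))
    (htrans' : MulAction.IsPretransitive (Subgroup.closure {α', β'}) (Fin d)) :
    ∃ l : Equiv.Perm (Fin d), l * α * l⁻¹ = α' ∧ l * β * l⁻¹ = β' :=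
  pairs_of_fixed_point_free_involutions_conjugate_general d hd α β α' β' hα hαf hβ hβf hα' hα'f hβ'
    hβ'f htrans htrans'
end

section
/- Let d ≥ 4 be even and let α, β be fixed-point-free involutions of Fin d such that the subgroup G = ⟨α, β⟩ acts transitively on Fin d. Then the product α∘β has cycle type [d/2, d/2], i.e. Equiv.Perm.cycleType (α * β) is the multiset {d/2, d/2}, and moreover there exists a block Λ of G with |Λ| = d/2, namely either of the two orbits of the cyclic group generated by α∘β. -/
open Pointwise

private lemma sign_fpf_involution (d : ℕ) (γ : Equiv.Perm (Fin d)) (hγ : γ * γ = 1)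
    (hγ' : ∀ x, γ x ≠ x) : Equiv.Perm.sign γ = (-1 : ℤˣ) ^ (d + d / 2) := by
  have hsupp : γ.support = Finset.univ :=
    Finset.eq_univ_iff_forall.mpr fun x => Equiv.Perm.mem_support.mpr (hγ' x)
  have hsum : γ.cycleType.sum = d := by
    rw [Equiv.Perm.sum_cycleType, hsupp, Finset.card_univ, Fintype.card_fin]
  have h2 : ∀ n ∈ γ.cycleType, n = 2 := by
    intro n hn
    have h2n := Equiv.Perm.two_le_of_mem_cycleType hn
    have hdvd : n ∣ 2 := by
      have h1 := Multiset.dvd_lcm hn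
      rw [Equiv.Perm.lcm_cycleType] at h1
      exact h1.trans (orderOf_dvd_of_pow_eq_one (by rw [pow_two, hγ]))
    have := Nat.le_of_dvd two_pos hdvd
    omega
  have hrep : γ.cycleType = Multiset.replicate (Multiset.card γ.cycleType) 2 :=
    Multiset.eq_replicate_card.mpr h2
  have hcard : Multiset.card γ.cycleType = d / 2 := by
    have hs : γ.cycleType.sum = Multiset.card γ.cycleType * 2 := by
      conv_lhs => rw [hrep]
      simp [Multiset.sum_replicate, Nat.smul_one_eq_cast]
    omega
  rw [Equiv.Perm.sign_of_cycleType, hsum, hcard]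

/-- If `α, β` are fixed-point-free involutions of `Fin d` (`d ≥ 4` even) generating a
transitive subgroup `G`, then `α * β` has cycle type `[d/2, d/2]`, and each orbit of the
cyclic group generated by `α * β` is a block of `G` of cardinality `d/2`. -/
theorem product_of_two_fixed_point_free_involutions_cycleType_and_block
    (d : ℕ) (hd : 4 ≤ d) (hdeven : Even d)
    (α β : Equiv.Perm (Fin d))
    (hα : α * α = 1) (hα' : ∀ x : Fin d, α x ≠ x)
    (hβ : β * β = 1) (hβ' : ∀ x : Fin d, β x ≠ x)
    (htrans : MulAction.IsPretransitive (Subgroup.closure {α, β}) (Fin d)) :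
    Equiv.Perm.cycleType (α * β) = {d / 2, d / 2} ∧
    ∀ x : Fin d,
      MulAction.IsBlock (Subgroup.closure {α, β})
        (MulAction.orbit (Subgroup.zpowers (α * β)) x) ∧
      (MulAction.orbit (Subgroup.zpowers (α * β)) x).ncard = d / 2 := by
  set σ := α * β with hσdef
  have hαinv : α⁻¹ = α := by rw [eq_comm, eq_inv_iff_mul_eq_one, hα]
  have hβinv : β⁻¹ = β := by rw [eq_comm, eq_inv_iff_mul_eq_one, hβ]
  have hσinv : σ⁻¹ = β * α := by rw [hσdef, mul_inv_rev, hαinv, hβinv]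
  have hconj : α * σ * α⁻¹ = σ⁻¹ := by
    rw [hαinv, hσinv, hσdef, ← mul_assoc, hα, one_mul]
  have hconjk : ∀ k : ℤ, α * σ ^ k = σ ^ (-k) * α := by
    intro k
    have h2 : α * σ ^ k * α⁻¹ = σ ^ (-k) := by
      rw [← conj_zpow, hconj, inv_zpow, zpow_neg]
    calc α * σ ^ k = α * σ ^ k * α⁻¹ * α := by rw [inv_mul_cancel_right]
    _ = σ ^ (-k) * α := by rw [h2]
  have hconjk' : ∀ (k : ℤ) (x : Fin d), α ((σ ^ k) x) = (σ ^ (-k)) (α x) := by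
    intro k x
    have := congrArg (fun π : Equiv.Perm (Fin d) => π x) (hconjk k)
    simpa [Equiv.Perm.mul_apply] using this
  have hβeq : β = α * σ := by rw [hσdef, ← mul_assoc, hα, one_mul]
  -- every element of the closure is `σ ^ k` or `α * σ ^ k`
  have hmem : ∀ g ∈ Subgroup.closure {α, β}, ∃ k : ℤ, g = σ ^ k ∨ g = α * σ ^ k := by
    have hσα : ∀ k : ℤ, σ ^ k * α = α * σ ^ (-k) := by
      intro k; rw [hconjk, neg_neg]
    let S : Subgroup (Equiv.Perm (Fin d)) :=
      { carrier := {g | ∃ k : ℤ, g = σ ^ k ∨ g = α * σ ^ k}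
        one_mem' := ⟨0, Or.inl (zpow_zero σ).symm⟩
        mul_mem' := by
          rintro a b ⟨k, rfl | rfl⟩ ⟨m, rfl | rfl⟩
          · exact ⟨k + m, Or.inl (zpow_add σ k m).symm⟩
          · refine ⟨-k + m, Or.inr ?_⟩
            rw [← mul_assoc, hσα, mul_assoc, ← zpow_add]
          · exact ⟨k + m, Or.inr (by rw [mul_assoc, ← zpow_add])⟩
          · refine ⟨-k + m, Or.inl ?_⟩
            rw [mul_assoc, ← mul_assoc (σ ^ k), hσα, ← mul_assoc, ← mul_assoc,
              hα, one_mul, ← zpow_add]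
        inv_mem' := by
          rintro a ⟨k, rfl | rfl⟩
          · exact ⟨-k, Or.inl (by rw [← zpow_neg])⟩
          · refine ⟨k, Or.inr ?_⟩
            rw [mul_inv_rev, hαinv, ← zpow_neg, hσα, neg_neg] }
    intro g hg
    have hle : Subgroup.closure {α, β} ≤ S := by
      rw [Subgroup.closure_le]
      rintro x (rfl | rfl)
      · exact ⟨0, Or.inr (by rw [zpow_zero, mul_one])⟩
      · exact ⟨1, Or.inr (by rw [zpow_one, hβeq])⟩
    exact hle hg
  -- transitivity: every point is in the σ-orbit of x or of α x
  have hcover : ∀ x y : Fin d, (∃ k : ℤ, (σ ^ k) x = y) ∨ (∃ k : ℤ, (σ ^ k) (α x) = y) := by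
    intro x y
    obtain ⟨g, hg⟩ := htrans.exists_smul_eq x y
    have hgx : (g : Equiv.Perm (Fin d)) x = y := hg
    obtain ⟨k, hk | hk⟩ := hmem (g : Equiv.Perm (Fin d)) g.2
    · exact Or.inl ⟨k, by rw [← hk]; exact hgx⟩
    · refine Or.inr ⟨-k, ?_⟩
      rw [← hconjk' k x, ← Equiv.Perm.mul_apply, ← hk]
      exact hgx
  -- σ has no fixed points
  have hσ' : ∀ z : Fin d, σ z ≠ z := by
    intro z hz
    have hβz : β z = α z := by
      have h1 : α (α (β z)) = β z := by
        have := congrArg (fun π : Equiv.Perm (Fin d) => π (β z)) hα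
        simpa [Equiv.Perm.mul_apply] using this
      have h2 : α (β z) = z := hz
      rw [h2] at h1
      rw [← h1]
    have hfix2 : σ (α z) = α z := by
      show α (β (α z)) = α z
      rw [← hβz, ← Equiv.Perm.mul_apply β β, hβ]
      simpa using hβz.symm
    have h1 : ∀ k : ℤ, (σ ^ k) z = z := fun k =>
      Equiv.Perm.zpow_apply_eq_self_of_apply_eq_self hz k
    have h2 : ∀ k : ℤ, (σ ^ k) (α z) = α z := fun k =>
      Equiv.Perm.zpow_apply_eq_self_of_apply_eq_self hfix2 k
    have hsub : (Finset.univ : Finset (Fin d)) ⊆ {z, α z} := by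
      intro y _
      rcases hcover z y with ⟨k, hk⟩ | ⟨k, hk⟩
      · rw [h1 k] at hk; simp [← hk]
      · rw [h2 k] at hk; simp [← hk]
    have hcard := Finset.card_le_card hsub
    have : ({z, α z} : Finset (Fin d)).card ≤ 2 := Finset.card_insert_le _ _ |>.trans (by simp)
    simp only [Finset.card_univ, Fintype.card_fin] at hcard
    omega
  -- sign of σ is 1
  have hsign : Equiv.Perm.sign σ = 1 := by
    rw [hσdef, map_mul, sign_fpf_involution d α hα hα', sign_fpf_involution d β hβ hβ']
    exact Int.units_mul_self _
  -- α x is never in the σ-orbit of x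
  have hne : ∀ x : Fin d, ¬ (∃ k : ℤ, (σ ^ k) x = α x) := by
    rintro x ⟨k, hk⟩
    have hcyc : σ.IsCycle := by
      refine ⟨x, hσ' x, fun y _ => ?_⟩
      rcases hcover x y with ⟨m, hm⟩ | ⟨m, hm⟩
      · exact ⟨m, hm⟩
      · refine ⟨m + k, ?_⟩
        rw [zpow_add, Equiv.Perm.mul_apply, hk, hm]
    have hsupp : σ.support = Finset.univ :=
      Finset.eq_univ_iff_forall.mpr fun y => Equiv.Perm.mem_support.mpr (hσ' y)
    have hs := hcyc.sign
    rw [hsupp, Finset.card_univ, Fintype.card_fin, hsign, Even.neg_one_pow hdeven] at hs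
    have : (1 : ℤ) = -1 := congrArg Units.val hs
    norm_num at this
  -- description of orbits
  have horb : ∀ y : Fin d, MulAction.orbit (Subgroup.zpowers σ) y
      = {z : Fin d | ∃ k : ℤ, (σ ^ k) y = z} := by
    intro y
    ext z
    constructor
    · rintro ⟨⟨g, hg⟩, rfl⟩
      obtain ⟨k, rfl⟩ := Subgroup.mem_zpowers_iff.mp hg
      exact ⟨k, rfl⟩
    · rintro ⟨k, rfl⟩
      exact ⟨⟨σ ^ k, Subgroup.mem_zpowers_iff.mpr ⟨k, rfl⟩⟩, rfl⟩
  -- the two orbits are disjoint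
  have hdisj : ∀ x : Fin d, Disjoint (MulAction.orbit (Subgroup.zpowers σ) x)
      (MulAction.orbit (Subgroup.zpowers σ) (α x)) := by
    intro x
    rw [horb, horb, Set.disjoint_left]
    rintro z ⟨k, rfl⟩ ⟨m, hm⟩
    refine hne x ⟨-m + k, ?_⟩
    rw [zpow_add, Equiv.Perm.mul_apply, ← hm, ← Equiv.Perm.mul_apply, ← zpow_add,
      neg_add_cancel, zpow_zero, Equiv.Perm.one_apply]
  -- the two orbits cover everything
  have huniv : ∀ x : Fin d, MulAction.orbit (Subgroup.zpowers σ) x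
      ∪ MulAction.orbit (Subgroup.zpowers σ) (α x) = Set.univ := by
    intro x
    rw [horb, horb]
    ext z
    simp only [Set.mem_union, Set.mem_setOf_eq, Set.mem_univ, iff_true]
    exact hcover x z
  -- α maps the orbit of x to the orbit of α x
  have himgα : ∀ x : Fin d, α '' MulAction.orbit (Subgroup.zpowers σ) x
      = MulAction.orbit (Subgroup.zpowers σ) (α x) := by
    intro x
    rw [horb, horb]
    ext z
    constructor
    · rintro ⟨w, ⟨k, rfl⟩, rfl⟩
      exact ⟨-k, (hconjk' k x).symm⟩
    · rintro ⟨k, rfl⟩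
      exact ⟨(σ ^ (-k)) x, ⟨-k, rfl⟩, by rw [hconjk' (-k) x, neg_neg]⟩
  -- each orbit has d / 2 elements
  have hsize : ∀ x : Fin d, (MulAction.orbit (Subgroup.zpowers σ) x).ncard = d / 2 := by
    intro x
    have h1 : (MulAction.orbit (Subgroup.zpowers σ) (α x)).ncard
        = (MulAction.orbit (Subgroup.zpowers σ) x).ncard := by
      rw [← himgα x, Set.ncard_image_of_injective _ α.injective]
    have h2 : (MulAction.orbit (Subgroup.zpowers σ) x).ncard
        + (MulAction.orbit (Subgroup.zpowers σ) (α x)).ncard = d := by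
      rw [← Set.ncard_union_eq (hdisj x), huniv x, Set.ncard_univ,
        Nat.card_eq_fintype_card, Fintype.card_fin]
    omega
  -- the orbits are blocks
  have hblock : ∀ x : Fin d, MulAction.IsBlock (Subgroup.closure {α, β})
      (MulAction.orbit (Subgroup.zpowers σ) x) := by
    intro x
    rw [MulAction.isBlock_iff_smul_eq_or_disjoint]
    intro g
    have hsmul : ∃ y : Fin d, g • MulAction.orbit (Subgroup.zpowers σ) x
        = MulAction.orbit (Subgroup.zpowers σ) y := by
      obtain ⟨k, hk | hk⟩ := hmem (g : Equiv.Perm (Fin d)) g.2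
      · refine ⟨x, ?_⟩
        rw [horb x]
        ext z
        constructor
        · rintro ⟨w, ⟨m, rfl⟩, rfl⟩
          refine ⟨k + m, ?_⟩
          show ((σ ^ (k + m)) x) = g • ((σ ^ m) x)
          show ((σ ^ (k + m)) x) = (g : Equiv.Perm (Fin d)) ((σ ^ m) x)
          rw [hk, zpow_add, Equiv.Perm.mul_apply]
        · rintro ⟨m, rfl⟩
          refine ⟨(σ ^ (-k + m)) x, ⟨-k + m, rfl⟩, ?_⟩
          show (g : Equiv.Perm (Fin d)) ((σ ^ (-k + m)) x) = (σ ^ m) x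
          rw [hk, ← Equiv.Perm.mul_apply, ← zpow_add]
          norm_num
      · refine ⟨α x, ?_⟩
        rw [horb x, horb (α x)]
        ext z
        constructor
        · rintro ⟨w, ⟨m, rfl⟩, rfl⟩
          refine ⟨-(k + m), ?_⟩
          show (σ ^ (-(k + m))) (α x) = (g : Equiv.Perm (Fin d)) ((σ ^ m) x)
          rw [hk, Equiv.Perm.mul_apply, ← Equiv.Perm.mul_apply (σ ^ k) (σ ^ m),
            ← zpow_add, hconjk' (k + m) x]
        · rintro ⟨m, rfl⟩
          refine ⟨(σ ^ (-(k + m))) x, ⟨-(k + m), rfl⟩, ?_⟩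
          show (g : Equiv.Perm (Fin d)) ((σ ^ (-(k + m))) x) = (σ ^ m) (α x)
          have hm' : -(k + -(k + m)) = m := by ring
          rw [hk, Equiv.Perm.mul_apply, ← Equiv.Perm.mul_apply (σ ^ k) (σ ^ (-(k + m))),
            ← zpow_add, hconjk' (k + -(k + m)) x, hm']
    obtain ⟨y, hy⟩ := hsmul
    rw [hy]
    exact MulAction.orbit.eq_or_disjoint y x
  -- the cycle type
  have hd0 : (0 : ℕ) < d := by omega
  set x₀ : Fin d := ⟨0, hd0⟩ with hx₀
  have hdis : ∀ z : Fin d, ¬ (σ.SameCycle x₀ z ∧ σ.SameCycle (α x₀) z) := by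
    rintro z ⟨h1, h2⟩
    exact hne x₀ (h1.trans h2.symm)
  have hprod : σ.cycleOf x₀ * σ.cycleOf (α x₀) = σ := by
    ext z
    rw [Equiv.Perm.mul_apply]
    by_cases h : σ.SameCycle (α x₀) z
    · rw [Equiv.Perm.cycleOf_apply σ (α x₀) z, if_pos h,
        Equiv.Perm.cycleOf_apply σ x₀ (σ z), if_neg]
      intro hcon
      exact hdis z ⟨hcon.trans ⟨-1, by simp⟩, h⟩
    · have h' : σ.SameCycle x₀ z := (hcover x₀ z).resolve_right h
      rw [Equiv.Perm.cycleOf_apply σ (α x₀) z, if_neg h,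
        Equiv.Perm.cycleOf_apply σ x₀ z, if_pos h']
  have hdisjc : (σ.cycleOf x₀).Disjoint (σ.cycleOf (α x₀)) := by
    intro z
    by_cases h : σ.SameCycle x₀ z
    · exact Or.inr (by rw [Equiv.Perm.cycleOf_apply, if_neg (fun hcon => hdis z ⟨h, hcon⟩)])
    · exact Or.inl (by rw [Equiv.Perm.cycleOf_apply, if_neg h])
  have hct := Equiv.Perm.cycleType_eq [σ.cycleOf x₀, σ.cycleOf (α x₀)]
    (by simpa using hprod)
    (by
      intro τ hτ
      simp only [List.mem_cons, List.mem_singleton, List.not_mem_nil, or_false] at hτ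
      rcases hτ with rfl | rfl
      · exact Equiv.Perm.isCycle_cycleOf σ (hσ' x₀)
      · exact Equiv.Perm.isCycle_cycleOf σ (hσ' (α x₀)))
    (by simp [hdisjc])
  have hsuppcard : ∀ y : Fin d, (σ.cycleOf y).support.card = d / 2 := by
    intro y
    have hcoe : ↑(σ.cycleOf y).support = MulAction.orbit (Subgroup.zpowers σ) y := by
      rw [horb]
      ext z
      simp only [Finset.coe_sort_coe, Finset.mem_coe,
        Equiv.Perm.mem_support_cycleOf_iff, Set.mem_setOf_eq]
      constructor
      · rintro ⟨h1, _⟩; exact h1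
      · intro h1; exact ⟨h1, Equiv.Perm.mem_support.mpr (hσ' y)⟩
    rw [← Set.ncard_coe_finset, hcoe, hsize]
  refine ⟨?_, fun x => ⟨hblock x, hsize x⟩⟩
  rw [hct]
  simp only [List.map_cons, List.map_nil, Function.comp_apply, hsuppcard]
  rfl
end

section
/- Let d ≥ 2 and let Ω = Fin d. Let γ₁, γ₂, α be permutations of Ω with γ₁ ∘ γ₁ = id, γ₂ ∘ γ₂ = id, and α² · γ₁ · γ₂ = 1, and suppose the subgroup G = ⟨α, γ₁, γ₂⟩ acts transitively on Ω. If the fixed-point set Fix(γ₁∘γ₂) = {x : γ₁(γ₂ x) = x} is nonempty, then γ₁ ∘ γ₂ = id, i.e. γ₁ = γ₂. -/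
private lemma conj_inv_eq' {G : Type*} [Group G] {σ τ x : G} (h : x * σ * x⁻¹ = τ) :
    x * σ⁻¹ * x⁻¹ = τ⁻¹ := by rw [← h]; group

private lemma conj_inv_elem' {G : Type*} [Group G] {σ τ x : G} (h : x * σ * x⁻¹ = τ) :
    x⁻¹ * τ * x = σ := by rw [← h]; group

/-- If `γ₁, γ₂` are involutions of `Fin d` (`d ≥ 2`), `α² γ₁ γ₂ = 1`, the group generated by
`α, γ₁, γ₂` is transitive, and `γ₁ ∘ γ₂` has a fixed point, then `γ₁ γ₂ = 1`, i.e. `γ₁ = γ₂`. -/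
theorem fix_nonempty_implies_eq
    (d : ℕ) (hd : 2 ≤ d)
    (γ₁ γ₂ α : Equiv.Perm (Fin d))
    (hγ₁ : γ₁ * γ₁ = 1) (hγ₂ : γ₂ * γ₂ = 1)
    (hrel : α ^ 2 * γ₁ * γ₂ = 1)
    (htrans : MulAction.IsPretransitive (Subgroup.closure {α, γ₁, γ₂}) (Fin d))
    (hfix : ∃ x : Fin d, γ₁ (γ₂ x) = x) :
    γ₁ * γ₂ = 1 ∧ γ₁ = γ₂ := by
  set σ : Equiv.Perm (Fin d) := γ₁ * γ₂ with hσ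
  have hi1 : γ₁⁻¹ = γ₁ := inv_eq_of_mul_eq_one_right hγ₁
  have hi2 : γ₂⁻¹ = γ₂ := inv_eq_of_mul_eq_one_right hγ₂
  have hσinv : σ⁻¹ = γ₂ * γ₁ := by rw [hσ, mul_inv_rev, hi1, hi2]
  have hα2 : α ^ 2 = σ⁻¹ := by
    rw [hσ]
    have h' : α ^ 2 * (γ₁ * γ₂) = 1 := by rw [← mul_assoc]; exact hrel
    exact eq_inv_of_mul_eq_one_left h'
  -- conjugation facts
  have hc1 : γ₁ * σ * γ₁⁻¹ = σ⁻¹ := by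
    rw [hi1, hσ, hσinv, show γ₁ * (γ₁ * γ₂) * γ₁ = (γ₁ * γ₁) * (γ₂ * γ₁) from by group,
      hγ₁, one_mul]
  have hc2 : γ₂ * σ * γ₂⁻¹ = σ⁻¹ := by
    rw [hi2, hσ, hσinv, show γ₂ * (γ₁ * γ₂) * γ₂ = (γ₂ * γ₁) * (γ₂ * γ₂) from by group,
      hγ₂, mul_one]
  have hcα : α * σ * α⁻¹ = σ := by
    have h : σ = (α ^ 2)⁻¹ := by rw [hα2, inv_inv]
    rw [h]; group
  -- every element of the closure conjugates σ into {σ, σ⁻¹}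
  have key : ∀ g ∈ Subgroup.closure {α, γ₁, γ₂},
      g * σ * g⁻¹ = σ ∨ g * σ * g⁻¹ = σ⁻¹ := by
    intro g hg
    induction hg using Subgroup.closure_induction with
    | mem x hx =>
      rcases hx with h | h | h
      · subst h; exact Or.inl hcα
      · subst h; exact Or.inr hc1
      · subst h; exact Or.inr hc2
    | one => left; simp
    | mul x y hx hy ihx ihy =>
      have hxy : (x * y) * σ * (x * y)⁻¹ = x * (y * σ * y⁻¹) * x⁻¹ := by group
      rw [hxy]
      rcases ihy with h | h
      · rw [h]; exact ihx
      · rw [h]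
        rcases ihx with h' | h'
        · right; exact conj_inv_eq' h'
        · left; rw [conj_inv_eq' h', inv_inv]
    | inv x hx ihx =>
      rw [show x⁻¹ * σ * x⁻¹⁻¹ = x⁻¹ * σ * x from by rw [inv_inv]]
      rcases ihx with h | h
      · left; exact conj_inv_elem' h
      · right
        have h2 := conj_inv_elem' h
        have h3 := congrArg (·⁻¹) h2
        simpa [mul_inv_rev, mul_assoc] using h3
  -- fixed point set is invariant
  obtain ⟨x₀, hx₀⟩ := hfix
  have hx₀' : σ x₀ = x₀ := by simpa [hσ] using hx₀
  have hσ1 : σ = 1 := by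
    ext y
    obtain ⟨g, hg⟩ := htrans.exists_smul_eq x₀ y
    have hgy : (g : Equiv.Perm (Fin d)) x₀ = y := hg
    have hfixg : σ ((g : Equiv.Perm (Fin d)) x₀) = (g : Equiv.Perm (Fin d)) x₀ := by
      rcases key (g : Equiv.Perm (Fin d)) g.2 with h | h
      · rw [← h]
        simp [Equiv.Perm.mul_apply, hx₀']
      · have h3 : σ⁻¹ ((g : Equiv.Perm (Fin d)) x₀) = (g : Equiv.Perm (Fin d)) x₀ := by
          rw [← h]
          simp [Equiv.Perm.mul_apply, hx₀']
        have := congrArg σ h3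
        simpa using this.symm
    exact congrArg Fin.val (by simpa [hgy] using hfixg)
  refine ⟨hσ1, ?_⟩
  have h4 : γ₁ = γ₂⁻¹ := eq_inv_of_mul_eq_one_left hσ1
  rw [h4, hi2]
end

section
/- Let t ≥ 1, let γ₁, …, γ_t be permutations of Fin 4 each of cycle type [2,2] (fixed-point-free involutions of Fin 4), and let α be a permutation of Fin 4 satisfying α² · γ₁ · γ₂ ⋯ γ_t = 1. If the subgroup G = ⟨α, γ₁, …, γ_t⟩ of the symmetric group on Fin 4 acts transitively, then G is imprimitive: there exists a block Λ of G with |Λ| = 2. -/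
open Pointwise

namespace DegFourAux

/-- Membership in the Klein four subgroup of `Perm (Fin 4)`. -/
def inK (σ : Equiv.Perm (Fin 4)) : Prop := σ * σ = 1 ∧ (σ = 1 ∨ ∀ x, σ x ≠ x)

instance : DecidablePred inK := fun σ => by unfold inK; infer_instance

set_option maxHeartbeats 1000000 in
set_option maxRecDepth 10000 in
lemma inK_mul' : ∀ σ τ : Equiv.Perm (Fin 4),
    (σ * σ = 1 ∧ (σ = 1 ∨ ∀ x, σ x ≠ x)) → (τ * τ = 1 ∧ (τ = 1 ∨ ∀ x, τ x ≠ x)) →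
    ((σ * τ) * (σ * τ) = 1 ∧ (σ * τ = 1 ∨ ∀ x, (σ * τ) x ≠ x)) := by decide

lemma inK_mul : ∀ σ τ : Equiv.Perm (Fin 4), inK σ → inK τ → inK (σ * τ) := inK_mul'

lemma inK_one : inK 1 := by decide

set_option maxHeartbeats 1000000 in
set_option maxRecDepth 100000 in
lemma K_comm : ∀ σ τ : Equiv.Perm (Fin 4), inK σ → inK τ → σ * τ = τ * σ := by decide

set_option maxHeartbeats 4000000 in
set_option maxRecDepth 100000 in
lemma exists_beta : ∀ α : Equiv.Perm (Fin 4), inK (α * α) →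
    ∃ β : Equiv.Perm (Fin 4), (β * β = 1 ∧ ∀ x, β x ≠ x) ∧ α * β = β * α := by decide

lemma list_prod_inK : ∀ l : List (Equiv.Perm (Fin 4)), (∀ σ ∈ l, inK σ) → inK l.prod := by
  intro l
  induction l with
  | nil => intro _; simpa using inK_one
  | cons a l ih =>
    intro h
    rw [List.prod_cons]
    exact inK_mul _ _ (h a (by simp)) (ih fun σ hσ => h σ (by simp [hσ]))

end DegFourAux



/-- If `γ₁, …, γ_t` are fixed-point-free involutions of `Fin 4` (cycle type `[2,2]`) and `α`
satisfies `α² γ₁ ⋯ γ_t = 1`, then the subgroup generated by `α, γ₁, …, γ_t`, if transitive,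
is imprimitive: it has a block of cardinality `2`. -/
theorem degree_four_all_twos_imprimitive
    (t : ℕ) (ht : 1 ≤ t)
    (γ : Fin t → Equiv.Perm (Fin 4))
    (hγ : ∀ i, (γ i) * (γ i) = 1 ∧ ∀ x : Fin 4, γ i x ≠ x)
    (α : Equiv.Perm (Fin 4))
    (hrel : α ^ 2 * (List.ofFn γ).prod = 1)
    (htrans : MulAction.IsPretransitive (Subgroup.closure ({α} ∪ Set.range γ)) (Fin 4)) :
    ∃ Λ : Set (Fin 4),
      MulAction.IsBlock (Subgroup.closure ({α} ∪ Set.range γ)) Λ ∧ Λ.ncard = 2 := by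

  -- the product of the γ's lies in the Klein subgroup
  have hprod : DegFourAux.inK (List.ofFn γ).prod := by
    apply DegFourAux.list_prod_inK
    intro σ hσ
    rw [List.mem_ofFn] at hσ
    obtain ⟨i, rfl⟩ := hσ
    exact ⟨(hγ i).1, Or.inr (hγ i).2⟩
  -- hence α² lies in the Klein subgroup
  have hα2 : DegFourAux.inK (α * α) := by
    have : α * α = ((List.ofFn γ).prod)⁻¹ := by
      rw [← pow_two]
      exact eq_inv_of_mul_eq_one_left hrel
    rw [this, inv_eq_of_mul_eq_one_right hprod.1]
    exact hprod
  -- pick β : a fixed-point-free involution commuting with α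
  obtain ⟨β, ⟨hβ2, hβfpf⟩, hβα⟩ := DegFourAux.exists_beta α hα2
  have hβK : DegFourAux.inK β := ⟨hβ2, Or.inr hβfpf⟩
  -- β commutes with every element of the closure
  have hcomm : ∀ g ∈ Subgroup.closure ({α} ∪ Set.range γ), g * β = β * g := by
    intro g hg
    induction hg using Subgroup.closure_induction with
    | mem x hx =>
      rcases hx with hx | ⟨i, rfl⟩
      · rw [Set.mem_singleton_iff] at hx; subst hx; exact hβα
      · exact DegFourAux.K_comm _ _ ⟨(hγ i).1, Or.inr (hγ i).2⟩ hβK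
    | one => simp
    | mul x y _ _ hx hy => rw [mul_assoc, hy, ← mul_assoc, hx, mul_assoc]
    | inv x _ hx =>
      have := congrArg (fun z => x⁻¹ * z * x⁻¹) hx
      simpa [mul_assoc] using this.symm
  -- β as a function: β (β x) = x and β x ≠ x
  have hββ : ∀ x, β (β x) = x := fun x => by
    have := congrFun (congrArg (DFunLike.coe) hβ2) x
    simpa using this
  -- the block
  refine ⟨{0, β 0}, ?_, ?_⟩
  · rw [MulAction.isBlock_iff_smul_eq_or_disjoint]
    intro g
    have hgβ : ∀ x : Fin 4, (g : Equiv.Perm (Fin 4)) (β x) = β ((g : Equiv.Perm (Fin 4)) x) := by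
      intro x
      have := congrFun (congrArg (DFunLike.coe) (hcomm g g.2)) x
      simpa using this
    have hsmul : g • ({0, β 0} : Set (Fin 4)) =
        {(g : Equiv.Perm (Fin 4)) 0, β ((g : Equiv.Perm (Fin 4)) 0)} := by
      have hga : ∀ x : Fin 4, g • x = (g : Equiv.Perm (Fin 4)) x := fun _ => rfl
      rw [Set.smul_set_insert, Set.smul_set_singleton, hga, hga, hgβ]
    rw [hsmul]
    set y := (g : Equiv.Perm (Fin 4)) 0 with hy
    -- pairs {x, β x} are equal or disjoint
    by_cases h : Disjoint ({y, β y} : Set (Fin 4)) ({0, β 0} : Set (Fin 4))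
    · exact Or.inr h
    · left
      rw [Set.not_disjoint_iff] at h
      obtain ⟨z, hz1, hz2⟩ := h
      have key : ∀ x w : Fin 4, w = x ∨ w = β x → ({w, β w} : Set (Fin 4)) = {x, β x} := by
        rintro x w (rfl | rfl)
        · rfl
        · rw [hββ, Set.pair_comm]
      have e1 : ({z, β z} : Set (Fin 4)) = {y, β y} := key y z (by simpa using hz1)
      have e2 : ({z, β z} : Set (Fin 4)) = {0, β 0} := key 0 z (by simpa using hz2)
      rw [← e1, e2]
  · exact Set.ncard_pair (Ne.symm (hβfpf 0))
end
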